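/- arXiv:2402.02454 — 6 statements merged into one kernel-verified Lean document; each statement's English description precedes it below -/
import Mathlib

section
/- Let A ∈ ℝ^{n×d} with n ≤ d have full row rank and SVD A = UΣVᵀ, with V = [V₁ V₂] where V₁ consists of the first n columns. If α‖A‖² < 2, then for any initial guess y₀, the gradient descent iterates y_{k+1} = y_k − αAᵀ(Ay_k − b) converge, and the limit is y_∞ = V₂V₂ᵀy₀ + θ*, where θ* = Aᵀ(AAᵀ)⁻¹b. -/
/-!
In the orthonormal basis given by the columns of `V`, the matrix `Aᵀ A` becomes `Sᵀ S`, which is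
diagonal with entries `σⱼ²` for `j < n` and `0` for `j ≥ n`. The limit `y∞` solves the normal
equation `Aᵀ A y∞ = Aᵀ b` (since `A V₂ = 0` and `A Aᵀ` is invertible), so the error `y k - y∞`
is multiplied by `1 - α Aᵀ A` at each step, i.e. its `j`-th coordinate in that basis by
`1 - α σⱼ²`. As `σⱼ ≤ ‖A‖`, the step-size condition gives `|1 - α σⱼ²| < 1` for `j < n`, while
the coordinates `j ≥ n` of the initial error, those along `V₂`, vanish by the choice of `y∞`.
-/

open Matrix Filter

noncomputable def l2OpNorm {m p : ℕ} (M : Matrix (Fin m) (Fin p) ℝ) : ℝ :=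
  ‖LinearMap.toContinuousLinearMap (Matrix.toEuclideanLin M)‖

open Topology

namespace Matrix

theorem isUnit_of_rank_eq_card {K ι : Type*} [Field K] [Fintype ι] [DecidableEq ι]
    {M : Matrix ι ι K} (h : M.rank = Fintype.card ι) : IsUnit M := by
  rw [← isUnit_toLin'_iff, LinearMap.isUnit_iff_range_eq_top]
  exact Submodule.eq_top_of_finrank_eq (h.trans (Module.finrank_fintype_fun_eq_card K).symm)

theorem isUnit_mul_transpose_of_rank_eq_card {K m p : Type*} [Field K] [LinearOrder K]
    [IsStrictOrderedRing K] [Fintype m] [Fintype p] [DecidableEq m] {A : Matrix m p K}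
    (h : A.rank = Fintype.card m) : IsUnit (A * Aᵀ) :=
  isUnit_of_rank_eq_card ((rank_self_mul_transpose A).trans h)

theorem isDiag_transpose_mul_self_of_rectangular_diagonal {R : Type*} [CommRing R] {m p : ℕ}
    {S : Matrix (Fin m) (Fin p) R} (hS : ∀ (i : Fin m) (j : Fin p), (i : ℕ) ≠ j → S i j = 0) :
    (Sᵀ * S).IsDiag := by
  intro j k hjk
  rw [mul_apply]
  refine Finset.sum_eq_zero fun i _ => ?_
  by_cases hij : (i : ℕ) = j
  · rw [hS i k fun hik => hjk (Fin.ext (hij.symm.trans hik)), mul_zero]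
  · rw [transpose_apply, hS i j hij, zero_mul]

theorem diag_transpose_mul_self_pos {R m p : Type*} [CommRing R] [LinearOrder R]
    [IsStrictOrderedRing R] [Fintype m] {S : Matrix m p R} {i : m} {j : p} (h : S i j ≠ 0) :
    0 < (Sᵀ * S) j j :=
  Finset.sum_pos' (fun k _ => mul_self_nonneg (S k j))
    ⟨i, Finset.mem_univ i, mul_self_pos.mpr h⟩

open scoped Matrix.Norms.L2Operator in
theorem dotProduct_mulVec_self_le_l2OpNorm_sq {m p : ℕ} (M : Matrix (Fin m) (Fin p) ℝ)
    (x : Fin p → ℝ) :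
    M *ᵥ x ⬝ᵥ M *ᵥ x ≤ l2OpNorm M ^ 2 * (x ⬝ᵥ x) := by
  have h := M.l2_opNorm_mulVec (WithLp.toLp 2 x)
  have hsq := pow_le_pow_left₀ (norm_nonneg _) h 2
  rw [mul_pow, EuclideanSpace.real_norm_sq_eq, EuclideanSpace.real_norm_sq_eq] at hsq
  simp only [dotProduct, ← sq]
  exact hsq

end Matrix

theorem tendsto_zero_of_succ_eq_mul {u : ℕ → ℝ} {c : ℝ} (hu : ∀ k, u (k + 1) = c * u k)
    (hc : |c| < 1 ∨ u 0 = 0) : Tendsto u atTop (𝓝 0) := by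
  have hpow : u = fun k => c ^ k * u 0 := by
    funext k
    induction k with
    | zero => simp
    | succ k ih => rw [hu, ih, pow_succ']; ring
  rcases hc with hc | hu0
  · rw [hpow]
    simpa using (tendsto_pow_atTop_nhds_zero_of_abs_lt_one hc).mul_const (u 0)
  · rw [hpow, hu0]
    simp

theorem tendsto_zero_of_orthogonally_diagonal_step {ι : Type*} [Fintype ι] [DecidableEq ι]
    {M V : Matrix ι ι ℝ} {g : ι → ℝ} (hV : V * Vᵀ = 1) (hM : Vᵀ * M * V = diagonal g) {α : ℝ}
    {e : ℕ → ι → ℝ} (he : ∀ k, e (k + 1) = e k - α • M *ᵥ e k)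
    (hconv : ∀ j, |1 - α * g j| < 1 ∨ (Vᵀ *ᵥ e 0) j = 0) :
    Tendsto e atTop (𝓝 0) := by
  have hMV : Vᵀ * M = diagonal g * Vᵀ := by rw [← hM, Matrix.mul_assoc _ V, hV, Matrix.mul_one]
  have hcoord (j : ι) : Tendsto (fun k => (Vᵀ *ᵥ e k) j) atTop (𝓝 0) := by
    refine tendsto_zero_of_succ_eq_mul (fun k => ?_) (hconv j)
    rw [he, mulVec_sub, mulVec_smul, mulVec_mulVec, hMV, ← mulVec_mulVec]
    simp only [Pi.sub_apply, Pi.smul_apply, mulVec_diagonal, smul_eq_mul]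
    ring
  have hV_cont : Continuous fun v : ι → ℝ => V *ᵥ v :=
    continuous_const.matrix_mulVec continuous_id
  have h := (hV_cont.tendsto 0).comp (tendsto_pi_nhds.mpr hcoord)
  rw [mulVec_zero] at h
  refine h.congr fun k => ?_
  simp only [Function.comp_apply, mulVec_mulVec, hV, one_mulVec]

section NormalEquation

variable {R m p ι : Type*} [CommRing R] [Fintype m] [Fintype p] [Fintype ι]
  {A : Matrix m p R} {N : Matrix p ι R}

theorem gradient_step_sub_eq {b : m → R} {L y : p → R} (hL : (Aᵀ * A) *ᵥ L = Aᵀ *ᵥ b) (α : R) :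
    y - α • Aᵀ *ᵥ (A *ᵥ y - b) - L = y - L - α • (Aᵀ * A) *ᵥ (y - L) := by
  rw [mulVec_sub (Aᵀ * A), hL, ← mulVec_mulVec, ← mulVec_sub]
  abel

theorem transpose_mul_self_mulVec_add_pinv [DecidableEq m] (hAN : A * N = 0)
    (hA : IsUnit (A * Aᵀ)) (x : p → R) (b : m → R) :
    (Aᵀ * A) *ᵥ ((N * Nᵀ) *ᵥ x + Aᵀ *ᵥ ((A * Aᵀ)⁻¹ *ᵥ b)) = Aᵀ *ᵥ b := by
  rw [mulVec_add, mulVec_mulVec, mulVec_mulVec, mulVec_mulVec, Matrix.mul_assoc Aᵀ A,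
    ← Matrix.mul_assoc A, hAN, Matrix.zero_mul, Matrix.mul_zero, zero_mulVec, zero_add,
    Matrix.mul_assoc, Matrix.mul_assoc, ← Matrix.mul_assoc A,
    mul_nonsing_inv _ ((isUnit_iff_isUnit_det _).mp hA), Matrix.mul_one]

theorem transpose_mulVec_sub_proj_eq_zero [DecidableEq ι] (hAN : A * N = 0) (hN : Nᵀ * N = 1)
    (x : p → R) (w : m → R) :
    Nᵀ *ᵥ (x - ((N * Nᵀ) *ᵥ x + Aᵀ *ᵥ w)) = 0 := by
  rw [mulVec_sub, mulVec_add, mulVec_mulVec, mulVec_mulVec, ← Matrix.mul_assoc, hN,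
    Matrix.one_mul, ← transpose_mul, hAN, transpose_zero, zero_mulVec, add_zero, sub_self]

end NormalEquation

section SVD

theorem transpose_mul_submatrix_self_eq_one {R ι κ : Type*} [CommRing R] [Fintype ι]
    [DecidableEq ι] [Fintype κ] [DecidableEq κ] {V : Matrix ι ι R} (hV : V * Vᵀ = 1)
    {τ : κ → ι} (hτ : Function.Injective τ) : (V.submatrix id τ)ᵀ * V.submatrix id τ = 1 := by
  rw [transpose_submatrix, ← submatrix_mul _ _ _ _ _ Function.bijective_id,
    mul_eq_one_comm.mp hV, submatrix_one _ hτ]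

variable {R m p : Type*} [CommRing R] [Fintype m] [Fintype p] [DecidableEq p]
  {A S : Matrix m p R} {U : Matrix m m R} {V : Matrix p p R}

theorem mul_eq_of_svd (hV : V * Vᵀ = 1) (hSVD : A = U * S * Vᵀ) : A * V = U * S := by
  rw [hSVD, Matrix.mul_assoc, mul_eq_one_comm.mp hV, Matrix.mul_one]

theorem transpose_mul_self_eq_of_svd [DecidableEq m] (hU : U * Uᵀ = 1) (hV : V * Vᵀ = 1)
    (hSVD : A = U * S * Vᵀ) : (A * V)ᵀ * (A * V) = Sᵀ * S := by
  rw [mul_eq_of_svd hV hSVD, transpose_mul, Matrix.mul_assoc, ← Matrix.mul_assoc Uᵀ,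
    mul_eq_one_comm.mp hU, Matrix.one_mul]

theorem conj_transpose_mul_self_eq_of_svd [DecidableEq m] (hU : U * Uᵀ = 1) (hV : V * Vᵀ = 1)
    (hSVD : A = U * S * Vᵀ) : Vᵀ * (Aᵀ * A) * V = Sᵀ * S := by
  rw [← transpose_mul_self_eq_of_svd hU hV hSVD, transpose_mul]
  simp only [Matrix.mul_assoc]

end SVD

section RealSVD

variable {n d : ℕ} {A S : Matrix (Fin n) (Fin d) ℝ} {U : Matrix (Fin n) (Fin n) ℝ}
  {V : Matrix (Fin d) (Fin d) ℝ}

theorem mul_submatrix_eq_zero_of_svd {κ : Type*} (hV : V * Vᵀ = 1) (hSVD : A = U * S * Vᵀ)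
    (hS : ∀ (i : Fin n) (j : Fin d), (i : ℕ) ≠ j → S i j = 0) {τ : κ → Fin d}
    (hτ : ∀ t, n ≤ τ t) : A * V.submatrix id τ = 0 := by
  ext i t
  change (A * V) i (τ t) = 0
  rw [mul_eq_of_svd hV hSVD, mul_apply]
  exact Finset.sum_eq_zero fun k _ => by
    rw [hS k (τ t) (by have := hτ t; omega), mul_zero]

theorem diag_transpose_mul_self_le_of_svd (hU : U * Uᵀ = 1) (hV : V * Vᵀ = 1)
    (hSVD : A = U * S * Vᵀ) (j : Fin d) : (Sᵀ * S) j j ≤ l2OpNorm A ^ 2 :=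
  calc (Sᵀ * S) j j = A *ᵥ V.col j ⬝ᵥ A *ᵥ V.col j := by
        rw [← transpose_mul_self_eq_of_svd hU hV hSVD]; rfl
    _ ≤ l2OpNorm A ^ 2 * (V.col j ⬝ᵥ V.col j) := A.dotProduct_mulVec_self_le_l2OpNorm_sq _
    _ = l2OpNorm A ^ 2 := by
        rw [show V.col j ⬝ᵥ V.col j = (Vᵀ * V) j j from rfl, mul_eq_one_comm.mp hV,
          one_apply_eq, mul_one]

end RealSVD

theorem stmt_3 {n d : ℕ} (hnd : n ≤ d) (A : Matrix (Fin n) (Fin d) ℝ)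
    (hrank : A.rank = n) (b : Fin n → ℝ) (α : ℝ) (hα : 0 < α)
    (U : Matrix (Fin n) (Fin n) ℝ) (S : Matrix (Fin n) (Fin d) ℝ)
    (V : Matrix (Fin d) (Fin d) ℝ)
    (hU : U * Uᵀ = 1) (hV : V * Vᵀ = 1)
    (hSVD : A = U * S * Vᵀ)
    (hSdiag : ∀ (i : Fin n) (j : Fin d), (i : ℕ) ≠ (j : ℕ) → S i j = 0)
    (hSpos : ∀ i : Fin n, 0 < S i ⟨(i : ℕ), lt_of_lt_of_le i.isLt hnd⟩)
    (V₂ : Matrix (Fin d) (Fin (d - n)) ℝ)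
    (hV₂ : ∀ (i : Fin d) (j : Fin (d - n)), V₂ i j = V i ⟨n + (j : ℕ), by omega⟩)
    (hstepsize : α * l2OpNorm A ^ 2 < 2)
    (y : ℕ → Fin d → ℝ)
    (hstep : ∀ k, y (k + 1) = y k - α • Aᵀ.mulVec (A.mulVec (y k) - b)) :
    Tendsto y atTop
      (nhds ((V₂ * V₂ᵀ).mulVec (y 0) + Aᵀ.mulVec ((A * Aᵀ)⁻¹.mulVec b))) := by
  set L := (V₂ * V₂ᵀ) *ᵥ y 0 + Aᵀ *ᵥ ((A * Aᵀ)⁻¹ *ᵥ b)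
  let τ : Fin (d - n) → Fin d := fun t => ⟨n + t, by omega⟩
  have hV₂V : V₂ = V.submatrix id τ := Matrix.ext hV₂
  have hAV₂ : A * V₂ = 0 :=
    hV₂V ▸ mul_submatrix_eq_zero_of_svd hV hSVD hSdiag fun t => by simp [τ]
  have hV₂V₂ : V₂ᵀ * V₂ = 1 :=
    hV₂V ▸ transpose_mul_submatrix_self_eq_one hV fun s t h => by simpa [τ, Fin.ext_iff] using h
  have hL : (Aᵀ * A) *ᵥ L = Aᵀ *ᵥ b := transpose_mul_self_mulVec_add_pinv hAV₂
    (isUnit_mul_transpose_of_rank_eq_card (hrank.trans (Fintype.card_fin n).symm)) _ _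
  have hconj : Vᵀ * (Aᵀ * A) * V = diagonal (Sᵀ * S).diag :=
    (conj_transpose_mul_self_eq_of_svd hU hV hSVD).trans
      (isDiag_transpose_mul_self_of_rectangular_diagonal hSdiag).diagonal_diag.symm
  suffices Tendsto (fun k => y k - L) atTop (𝓝 0) by simpa using this.add_const L
  refine tendsto_zero_of_orthogonally_diagonal_step hV hconj
    (fun k => (congrArg (· - L) (hstep k)).trans (gradient_step_sub_eq hL α)) fun j => ?_
  by_cases hj : (j : ℕ) < n
  · left
    have hpos : 0 < (Sᵀ * S) j j := diag_transpose_mul_self_pos (hSpos ⟨j, hj⟩).ne'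
    have hle := diag_transpose_mul_self_le_of_svd hU hV hSVD j
    rw [diag_apply, abs_lt]
    constructor <;> nlinarith
  · right
    obtain ⟨t, rfl⟩ : ∃ t, τ t = j := ⟨⟨j - n, by omega⟩, Fin.ext (by simp [τ]; omega)⟩
    have h : (V₂ᵀ *ᵥ (y 0 - L)) t = 0 :=
      congrFun (transpose_mulVec_sub_proj_eq_zero hAV₂ hV₂V₂ _ _) t
    rwa [hV₂V] at h
end

section
/- For the one-hidden-layer linear network with gradient descent updates x_{k+1} = x_k − α W_kᵀAᵀ(AW_k x_k − b) and W_{k+1} = W_k − αAᵀ(AW_k x_k − b)x_kᵀ: if W₀ = Aᵀv₀x₀ᵀ for some v₀ ∈ ℝⁿ and x_k ≠ 0 for all k, then for every k there exists v_k ∈ ℝⁿ such that W_k = Aᵀv_k x_kᵀ. -/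
open Matrix

private lemma vmv_mulVec {m d : ℕ} (a : Fin m → ℝ) (b y : Fin d → ℝ) :
    (vecMulVec a b).mulVec y = (b ⬝ᵥ y) • a := by
  ext i
  simp [vecMulVec_apply, mulVec, dotProduct, Finset.sum_mul, Finset.mul_sum,
    mul_comm, mul_left_comm, mul_assoc]

private lemma vmv_transpose {m d : ℕ} (a : Fin m → ℝ) (b : Fin d → ℝ) :
    (vecMulVec a b)ᵀ = vecMulVec b a := by
  ext i j
  simp [vecMulVec_apply, mul_comm]

private lemma vmv_sub {m d : ℕ} (a b : Fin m → ℝ) (c : Fin d → ℝ) :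
    vecMulVec (a - b) c = vecMulVec a c - vecMulVec b c := by
  ext i j
  simp [vecMulVec_apply, sub_mul]

private lemma vmv_smul_left {m d : ℕ} (r : ℝ) (a : Fin m → ℝ) (c : Fin d → ℝ) :
    vecMulVec (r • a) c = r • vecMulVec a c := by
  ext i j
  simp [vecMulVec_apply, mul_assoc]

private lemma vmv_smul_right {m d : ℕ} (r : ℝ) (a : Fin m → ℝ) (c : Fin d → ℝ) :
    vecMulVec a (r • c) = r • vecMulVec a c := by
  ext i j
  simp [vecMulVec_apply, mul_comm, mul_left_comm]

theorem stmt_7 {n d : ℕ} (A : Matrix (Fin n) (Fin d) ℝ) (b : Fin n → ℝ) (α : ℝ)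
    (W : ℕ → Matrix (Fin d) (Fin d) ℝ) (x : ℕ → Fin d → ℝ)
    (hxstep : ∀ k, x (k + 1) =
      x k - α • (W k)ᵀ.mulVec (Aᵀ.mulVec (A.mulVec ((W k).mulVec (x k)) - b)))
    (hWstep : ∀ k, W (k + 1) =
      W k - α • (Aᵀ * vecMulVec (A.mulVec ((W k).mulVec (x k)) - b) (x k)))
    (v₀ : Fin n → ℝ) (hW0 : W 0 = Aᵀ * vecMulVec v₀ (x 0))
    (hx : ∀ k, x k ≠ 0) :
    ∀ k, ∃ v : Fin n → ℝ, W k = Aᵀ * vecMulVec v (x k) := by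
  intro k
  induction k with
  | zero => exact ⟨v₀, hW0⟩
  | succ k ih =>
    obtain ⟨v, hv⟩ := ih
    obtain ⟨r, hr⟩ : ∃ r, A.mulVec ((W k).mulVec (x k)) - b = r := ⟨_, rfl⟩
    have hxs := hxstep k
    have hWs := hWstep k
    rw [hr] at hxs hWs
    obtain ⟨t, ht⟩ : ∃ t, v ⬝ᵥ A.mulVec (Aᵀ.mulVec r) = t := ⟨_, rfl⟩
    have hxk1 : x (k + 1) = (1 - α * t) • x k := by
      have h1 : (W k)ᵀ.mulVec (Aᵀ.mulVec r) = t • x k := by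
        rw [hv, transpose_mul, transpose_transpose, vmv_transpose,
          ← mulVec_mulVec, vmv_mulVec, ht]
      rw [hxs, h1]
      ext i
      simp only [Pi.sub_apply, Pi.smul_apply, smul_eq_mul]
      ring
    have hcne : (1 - α * t) ≠ 0 := by
      intro h
      apply hx (k + 1)
      rw [hxk1, h, zero_smul]
    refine ⟨(1 - α * t)⁻¹ • (v - α • r), ?_⟩
    have hW1 : W (k + 1) = Aᵀ * vecMulVec (v - α • r) (x k) := by
      rw [hWs, hv, vmv_sub, vmv_smul_left, Matrix.mul_sub, Matrix.mul_smul]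
    rw [hW1, hxk1, vmv_smul_right, vmv_smul_left, smul_smul,
      mul_inv_cancel₀ hcne, one_smul]
end

section
/- Single step rank-one preservation: let W = Aᵀvxᵀ with x ≠ 0, r = AWx − b, and define Z = W − αAᵀrxᵀ and y = x − αWᵀAᵀr. Then yᵀy·Z = Z·yyᵀ, i.e., ‖y‖²Z = Zyyᵀ. -/
open Matrix

lemma my_mul_vecMulVec {n d e : ℕ} (M : Matrix (Fin d) (Fin n) ℝ) (a : Fin n → ℝ)
    (b : Fin e → ℝ) : M * vecMulVec a b = vecMulVec (M.mulVec a) b := by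
  ext i j
  simp [Matrix.mul_apply, vecMulVec_apply, mulVec, dotProduct, Finset.sum_mul, mul_assoc]

lemma my_vecMulVec_mul {d : ℕ} (a b c e : Fin d → ℝ) :
    vecMulVec a b * vecMulVec c e = (b ⬝ᵥ c) • vecMulVec a e := by
  ext i j
  simp [Matrix.mul_apply, vecMulVec_apply, dotProduct, Finset.mul_sum, Finset.sum_mul]
  ring_nf
  apply Finset.sum_congr rfl
  intros; ring

lemma my_vecMulVec_mulVec {n d : ℕ} (a : Fin d → ℝ) (b w : Fin n → ℝ) :
    (vecMulVec a b).mulVec w = (b ⬝ᵥ w) • a := by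
  ext i
  simp [mulVec, vecMulVec_apply, dotProduct, Finset.sum_mul, Finset.mul_sum]
  apply Finset.sum_congr rfl
  intros; ring

theorem stmt_8 {n d : ℕ} (A : Matrix (Fin n) (Fin d) ℝ) (b : Fin n → ℝ)
    (α : ℝ) (v : Fin n → ℝ) (x : Fin d → ℝ) (hx : x ≠ 0)
    (W : Matrix (Fin d) (Fin d) ℝ) (hW : W = Aᵀ * vecMulVec v x)
    (r : Fin n → ℝ) (hr : r = A.mulVec (W.mulVec x) - b)
    (Z : Matrix (Fin d) (Fin d) ℝ) (hZ : Z = W - α • (Aᵀ * vecMulVec r x))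
    (y : Fin d → ℝ) (hy : y = x - α • Wᵀ.mulVec (Aᵀ.mulVec r)) :
    (y ⬝ᵥ y) • Z = Z * vecMulVec y y := by
  have hZ' : Z = vecMulVec (Aᵀ.mulVec v - α • Aᵀ.mulVec r) x := by
    rw [hZ, hW, my_mul_vecMulVec, my_mul_vecMulVec]
    ext i j
    simp [vecMulVec_apply, Pi.sub_apply, sub_mul, smul_mul_assoc]
    ring
  have hy' : y = (1 - α * (v ⬝ᵥ A.mulVec (Aᵀ.mulVec r))) • x := by
    have hWT : Wᵀ = vecMulVec x v * A := by
      rw [hW, transpose_mul, transpose_transpose]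
      congr 1
      ext i j; simp [vecMulVec_apply, transpose_apply, mul_comm]
    rw [hy, hWT, ← Matrix.mulVec_mulVec, my_vecMulVec_mulVec]
    ext i
    simp [Pi.sub_apply, sub_mul, smul_smul]
  set c := 1 - α * (v ⬝ᵥ A.mulVec (Aᵀ.mulVec r)) with hc
  rw [hy', hZ']
  have : vecMulVec (c • x) (c • x) = (c * c) • vecMulVec x x := by
    ext i j; simp [vecMulVec_apply]; ring
  rw [this, Matrix.mul_smul, my_vecMulVec_mul]
  rw [smul_dotProduct, dotProduct_smul, smul_smul, smul_smul]
  simp [smul_smul]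
end

section
/- Under the rank-one update: with W = Aᵀvxᵀ, r = AWx − b, Z = W − αAᵀrxᵀ, y = x − αWᵀAᵀr, and y ≠ 0, setting u = (1/‖y‖²)(v − αr)xᵀy gives Z = Aᵀuyᵀ. -/
/-!
Because `W = Aᵀ v xᵀ` has `x` as its right factor, the correction `Wᵀ Aᵀ r` is the multiple
`⟪Aᵀ v, Aᵀ r⟫ • x` of `x`, so `y = c • x` with `c = 1 - α ⟪Aᵀ v, Aᵀ r⟫`, while `Z = Aᵀ (v - α r) xᵀ`.
The coefficient `⟪x, y⟫ / ⟪y, y⟫` of `u` equals `c⁻¹`, which undoes the rescaling of `x`.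
-/

open Matrix

theorem transpose_mul_vecMulVec_mulVec {l m n R : Type*} [Fintype m] [Fintype n] [CommSemiring R]
    (B : Matrix n m R) (v : m → R) (x : l → R) (w : n → R) :
    (B * vecMulVec v x)ᵀ *ᵥ w = ((B *ᵥ v) ⬝ᵥ w) • x := by
  rw [mul_vecMulVec, transpose_vecMulVec, vecMulVec_mulVec, op_smul_eq_smul]

theorem inv_dotProduct_self_mul_dotProduct_smul {n R : Type*} [Fintype n] [Field R] [LinearOrder R]
    [IsStrictOrderedRing R] {c : R} {x : n → R} (hcx : c • x ≠ 0) :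
    ((c • x) ⬝ᵥ (c • x))⁻¹ * (x ⬝ᵥ (c • x)) = c⁻¹ := by
  have hc : c ≠ 0 := fun h => hcx (by rw [h, zero_smul])
  have hxx : x ⬝ᵥ x ≠ 0 := by
    rw [Ne, dotProduct_self_eq_zero]; rintro rfl; exact hcx (smul_zero c)
  simp only [smul_dotProduct, dotProduct_smul, smul_eq_mul]
  field_simp

theorem vecMulVec_inv_smul_smul {m n R : Type*} [Field R] {c : R} (hc : c ≠ 0) (w : m → R) (x : n → R) :
    vecMulVec (c⁻¹ • w) (c • x) = vecMulVec w x := by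
  rw [smul_vecMulVec, vecMulVec_smul, smul_smul, inv_mul_cancel₀ hc, one_smul]

theorem stmt_9_general {n d : ℕ} (A : Matrix (Fin n) (Fin d) ℝ)
    (α : ℝ) (v : Fin n → ℝ) (x : Fin d → ℝ)
    (W : Matrix (Fin d) (Fin d) ℝ) (hW : W = Aᵀ * vecMulVec v x)
    (r : Fin n → ℝ)
    (Z : Matrix (Fin d) (Fin d) ℝ) (hZ : Z = W - α • (Aᵀ * vecMulVec r x))
    (y : Fin d → ℝ) (hy : y = x - α • Wᵀ.mulVec (Aᵀ.mulVec r)) (hy0 : y ≠ 0)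
    (u : Fin n → ℝ) (hu : u = ((y ⬝ᵥ y)⁻¹ * (x ⬝ᵥ y)) • (v - α • r)) :
    Z = Aᵀ * vecMulVec u y := by
  set c : ℝ := 1 - α * ((Aᵀ *ᵥ v) ⬝ᵥ (Aᵀ *ᵥ r))
  have hy' : y = c • x := by
    rw [hy, hW, transpose_mul_vecMulVec_mulVec, smul_smul, sub_smul, one_smul]
  have hZ' : Z = Aᵀ * vecMulVec (v - α • r) x := by
    rw [hZ, hW, sub_vecMulVec, smul_vecMulVec, Matrix.mul_sub, Matrix.mul_smul]
  have hc : c ≠ 0 := fun h => hy0 (by rw [hy', h, zero_smul])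
  rw [hZ', hu, hy', inv_dotProduct_self_mul_dotProduct_smul (hy' ▸ hy0),
    vecMulVec_inv_smul_smul hc]

theorem stmt_9 {n d : ℕ} (A : Matrix (Fin n) (Fin d) ℝ) (b : Fin n → ℝ)
    (α : ℝ) (v : Fin n → ℝ) (x : Fin d → ℝ) (hx : x ≠ 0)
    (W : Matrix (Fin d) (Fin d) ℝ) (hW : W = Aᵀ * vecMulVec v x)
    (r : Fin n → ℝ) (hr : r = A.mulVec (W.mulVec x) - b)
    (Z : Matrix (Fin d) (Fin d) ℝ) (hZ : Z = W - α • (Aᵀ * vecMulVec r x))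
    (y : Fin d → ℝ) (hy : y = x - α • Wᵀ.mulVec (Aᵀ.mulVec r)) (hy0 : y ≠ 0)
    (u : Fin n → ℝ) (hu : u = ((y ⬝ᵥ y)⁻¹ * (x ⬝ᵥ y)) • (v - α • r)) :
    Z = Aᵀ * vecMulVec u y :=
  stmt_9_general A α v x W hW r Z hZ y hy hy0 u hu
end

section
/- If A has full row rank n, W = Aᵀvxᵀ with v ≠ 0, and AWx = b, then x lies in range((AW)ᵀ), and consequently x is the minimum norm solution of (AW)z = b. -/
open Matrix

/-!
Since `A * W = A Aᵀ v xᵀ` is the rank-one matrix `u xᵀ` with `u = A Aᵀ v`, and `b ≠ 0` forces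
`u ≠ 0`, the range of `(A W)ᵀ = x uᵀ` is the line through `x`. A solution `z` of `(A W) z = b`
satisfies `(x ⬝ᵥ z) u = (x ⬝ᵥ x) u`, hence `x ⬝ᵥ z = ‖x‖²`, and Cauchy–Schwarz gives `‖x‖ ≤ ‖z‖`.
-/

noncomputable def eNorm {d : ℕ} (v : Fin d → ℝ) : ℝ :=
  ‖(WithLp.equiv 2 (Fin d → ℝ)).symm v‖

section VecMulVec

variable {K m n : Type*} [Field K]

lemma exists_dotProduct_eq_one [Fintype m] [DecidableEq m] {u : m → K} (hu : u ≠ 0) :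
    ∃ w : m → K, u ⬝ᵥ w = 1 := by
  obtain ⟨i, hi⟩ := Function.ne_iff.mp hu
  exact ⟨Pi.single i (u i)⁻¹, by rw [dotProduct_single, mul_inv_cancel₀ hi]⟩

lemma exists_eq_transpose_vecMulVec_mulVec [Fintype m] {u : m → K} (hu : u ≠ 0) (x : n → K) :
    ∃ w : m → K, x = (vecMulVec u x)ᵀ *ᵥ w := by
  classical
  obtain ⟨w, hw⟩ := exists_dotProduct_eq_one hu
  refine ⟨w, ?_⟩
  rw [transpose_vecMulVec, vecMulVec_mulVec, op_smul_eq_smul, hw, one_smul]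

lemma dotProduct_eq_of_vecMulVec_mulVec_eq [Fintype n] {u : m → K} (hu : u ≠ 0) {x y z : n → K}
    (h : vecMulVec u x *ᵥ z = vecMulVec u x *ᵥ y) : x ⬝ᵥ z = x ⬝ᵥ y := by
  simp only [vecMulVec_mulVec, op_smul_eq_smul] at h
  exact smul_left_injective K hu h

end VecMulVec

lemma norm_le_of_inner_eq_norm_sq {E : Type*} [NormedAddCommGroup E] [InnerProductSpace ℝ E]
    {x z : E} (h : inner ℝ x z = ‖x‖ ^ 2) : ‖x‖ ≤ ‖z‖ := by
  rcases (norm_nonneg x).eq_or_lt with hx | hx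
  · rw [← hx]; exact norm_nonneg z
  · have : ‖x‖ * ‖x‖ ≤ ‖x‖ * ‖z‖ := by
      rw [← sq, ← h]; exact real_inner_le_norm x z
    exact le_of_mul_le_mul_left this hx

lemma eNorm_le_of_dotProduct_eq {d : ℕ} {x z : Fin d → ℝ} (h : x ⬝ᵥ z = x ⬝ᵥ x) :
    eNorm x ≤ eNorm z := by
  refine norm_le_of_inner_eq_norm_sq ?_
  rw [← real_inner_self_eq_norm_sq]
  change z ⬝ᵥ star x = x ⬝ᵥ star x
  rw [star_trivial, dotProduct_comm, h]

theorem stmt_10_general {n d : ℕ} (A : Matrix (Fin n) (Fin d) ℝ)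
    (b : Fin n → ℝ) (hb : b ≠ 0)
    (v : Fin n → ℝ) (x : Fin d → ℝ)
    (W : Matrix (Fin d) (Fin d) ℝ) (hW : W = Aᵀ * vecMulVec v x)
    (hsol : (A * W).mulVec x = b) :
    (∃ w : Fin n → ℝ, x = (A * W)ᵀ.mulVec w) ∧
      ∀ z : Fin d → ℝ, (A * W).mulVec z = b → eNorm x ≤ eNorm z := by
  have hAW : A * W = vecMulVec ((A * Aᵀ) *ᵥ v) x := by
    rw [hW, ← Matrix.mul_assoc, mul_vecMulVec]
  have hu : (A * Aᵀ) *ᵥ v ≠ 0 := by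
    rintro hu
    rw [hAW, hu, zero_vecMulVec, zero_mulVec] at hsol
    exact hb hsol.symm
  rw [hAW] at hsol ⊢
  refine ⟨exists_eq_transpose_vecMulVec_mulVec hu x, fun z hz => ?_⟩
  exact eNorm_le_of_dotProduct_eq (dotProduct_eq_of_vecMulVec_mulVec_eq hu (hz.trans hsol.symm))

theorem stmt_10 {n d : ℕ} (hnd : n ≤ d) (A : Matrix (Fin n) (Fin d) ℝ)
    (hrank : A.rank = n) (b : Fin n → ℝ) (hb : b ≠ 0)
    (v : Fin n → ℝ) (hv : v ≠ 0) (x : Fin d → ℝ)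
    (W : Matrix (Fin d) (Fin d) ℝ) (hW : W = Aᵀ * vecMulVec v x)
    (hsol : (A * W).mulVec x = b) :
    (∃ w : Fin n → ℝ, x = (A * W)ᵀ.mulVec w) ∧
      ∀ z : Fin d → ℝ, (A * W).mulVec z = b → eNorm x ≤ eNorm z :=
  stmt_10_general A b hb v x W hW hsol
end

section
/- Synchronized updates in depth-2 networks: if W₁^{(k)} has all columns zero except the first, and W₂^{(k)} equals the matrix whose first row is x_kᵀ and all other rows zero, then after one gradient descent step, W₂^{(k+1)} is the matrix whose first row is x_{k+1}ᵀ and all other rows zero, where x_{k+1} = x_k − αW₂^{(k)ᵀ}W₁^{(k)ᵀ}Aᵀ(AW₁^{(k)}W₂^{(k)}x_k − b). -/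
open Matrix

theorem stmt_14 {n d : ℕ} (A : Matrix (Fin n) (Fin d) ℝ) (b : Fin n → ℝ) (α : ℝ)
    (W₁ W₂ : Matrix (Fin d) (Fin d) ℝ) (x : Fin d → ℝ)
    (hW₁ : ∀ (i j : Fin d), (j : ℕ) ≠ 0 → W₁ i j = 0)
    (hW₂ : ∀ i j, W₂ i j = if (i : ℕ) = 0 then x j else 0)
    (r : Fin n → ℝ) (hr : r = A.mulVec ((W₁ * W₂).mulVec x) - b)
    (x' : Fin d → ℝ)
    (hx' : x' = x - α • W₂ᵀ.mulVec (W₁ᵀ.mulVec (Aᵀ.mulVec r)))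
    (W₂' : Matrix (Fin d) (Fin d) ℝ)
    (hW₂' : W₂' = W₂ - α • vecMulVec (W₁ᵀ.mulVec (Aᵀ.mulVec r)) x) :
    ∀ i j, W₂' i j = if (i : ℕ) = 0 then x' j else 0 := by
  intro i j
  set u := W₁ᵀ.mulVec (Aᵀ.mulVec r) with hu
  have hu0 : ∀ k : Fin d, (k : ℕ) ≠ 0 → u k = 0 := by
    intro k hk
    simp only [hu, mulVec, dotProduct, transpose_apply]
    exact Finset.sum_eq_zero fun l _ => by rw [hW₁ l k hk, zero_mul]
  have hW₂'ij : W₂' i j = W₂ i j - α * (u i * x j) := by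
    simp [hW₂', vecMulVec_apply]
  by_cases hi : (i : ℕ) = 0
  · have hmv : W₂ᵀ.mulVec u j = x j * u i := by
      simp only [mulVec, dotProduct, transpose_apply]
      rw [Finset.sum_eq_single i]
      · rw [hW₂, if_pos hi]
      · intro k _ hk
        rcases eq_or_ne (k : ℕ) 0 with h0 | h0
        · exact absurd (Fin.ext (h0.trans hi.symm)) hk
        · rw [hu0 k h0, mul_zero]
      · intro h; exact absurd (Finset.mem_univ i) h
    rw [hW₂'ij, hW₂, if_pos hi, if_pos hi, hx', Pi.sub_apply, Pi.smul_apply, hmv,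
      smul_eq_mul]
    ring
  · rw [hW₂'ij, hW₂, if_neg hi, if_neg hi, hu0 i hi]
    ring
end
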